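/- arXiv:math/0004034 — 2 statements merged into one kernel-verified Lean document; each statement's English description precedes it below -/
import Mathlib

section
/- Semisimplicity of the fusion algebra: the ℂ-algebra A with basis {Φ_λ}_{λ∈I} and product Φ_λ ⋆ Φ_μ = Σ_{ν∈I} N_{λμ}^ν Φ_ν and unit Φ_Ω is isomorphic, via the linear extension of Φ_λ ↦ (S_{λρ}/S_{Ωρ})_{ρ∈I}, to the function algebra ℂ^I with pointwise multiplication; in particular A is a commutative semisimple ring. -/
/-!
Let `χ_ρ(λ) = S_{λρ} / S_{Ωρ}`. Since `S† = S⁻¹`, the Verlinde formula says that `S` diagonalizes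
every fusion matrix, i.e. each `χ_ρ` is a character of the fusion rules:
`Σ_ν N_{λμ}^ν χ_ρ(ν) = χ_ρ(λ) χ_ρ(μ)`. Evaluating all characters at once is the map
`f ↦ (χ_ρ ⬝ f)_ρ`, whose matrix `diag(S_Ω)⁻¹ Sᵀ` is invertible; it is therefore a linear
isomorphism carrying the fusion product to the pointwise one.
-/

open Matrix

namespace Verlinde

section FusionRules

variable {I R : Type*} [Fintype I] [CommSemiring R]

def fusionMul (N : I → I → I → R) (f g : I → R) (ν : I) : R :=
  ∑ l, ∑ m, f l * g m * N l m ν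

theorem fusionMul_comm {N : I → I → I → R} (hN : ∀ l m, N l m = N m l) (f g : I → R) :
    fusionMul N f g = fusionMul N g f := by
  funext ν
  rw [fusionMul, fusionMul, Finset.sum_comm]
  exact Finset.sum_congr rfl fun m _ => Finset.sum_congr rfl fun l _ => by rw [hN]; ring

theorem dotProduct_fusionMul {N : I → I → I → R} {χ : I → R}
    (hχ : ∀ l m, χ ⬝ᵥ N l m = χ l * χ m) (f g : I → R) :
    χ ⬝ᵥ fusionMul N f g = (χ ⬝ᵥ f) * (χ ⬝ᵥ g) := by
  calc χ ⬝ᵥ fusionMul N f g = ∑ l, ∑ m, f l * g m * (χ ⬝ᵥ N l m) := by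
        simp only [dotProduct, fusionMul, Finset.mul_sum]
        rw [Finset.sum_comm]
        refine Finset.sum_congr rfl fun l _ => ?_
        rw [Finset.sum_comm]
        exact Finset.sum_congr rfl fun m _ => Finset.sum_congr rfl fun ν _ => by ring
    _ = (χ ⬝ᵥ f) * (χ ⬝ᵥ g) := by
        simp only [hχ]
        simp only [dotProduct, Finset.sum_mul_sum]
        exact Finset.sum_congr rfl fun l _ => Finset.sum_congr rfl fun m _ => by ring

end FusionRules

variable {I K : Type*} [Fintype I] [Field K]

/-- The Verlinde coefficients, with `V` in the role of `S† = S⁻¹`. -/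
def fusionCoeff (S V : Matrix I I K) (Ω : I) (l m n : I) : K :=
  ∑ ρ, S l ρ * S m ρ * V ρ n / S Ω ρ

theorem fusionCoeff_comm (S V : Matrix I I K) (Ω l m : I) :
    fusionCoeff S V Ω l m = fusionCoeff S V Ω m l := by
  funext n
  exact Finset.sum_congr rfl fun ρ _ => by ring

def charMatrix (S : Matrix I I K) (Ω : I) : Matrix I I K :=
  of fun ρ l => S l ρ / S Ω ρ

variable [DecidableEq I] {S V : Matrix I I K} {Ω : I}

theorem charMatrix_dotProduct_fusionCoeff (hVS : V * S = 1) (hS : ∀ ρ, S Ω ρ ≠ 0)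
    (ρ l m : I) :
    charMatrix S Ω ρ ⬝ᵥ fusionCoeff S V Ω l m = charMatrix S Ω ρ l * charMatrix S Ω ρ m := by
  have hδ : ∀ σ, ∑ ν, V σ ν * S ν ρ = if σ = ρ then 1 else 0 := fun σ => by
    rw [← Matrix.mul_apply, hVS, one_apply]
  calc charMatrix S Ω ρ ⬝ᵥ fusionCoeff S V Ω l m
      = ∑ σ, S l σ * S m σ / S Ω σ * (∑ ν, V σ ν * S ν ρ) / S Ω ρ := by
        simp only [dotProduct, charMatrix, of_apply, fusionCoeff, Finset.mul_sum, Finset.sum_div]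
        rw [Finset.sum_comm]
        exact Finset.sum_congr rfl fun σ _ => Finset.sum_congr rfl fun ν _ => by ring
    _ = charMatrix S Ω ρ l * charMatrix S Ω ρ m := by
        simp only [hδ, mul_ite, mul_one, mul_zero, ite_div, zero_div, Finset.sum_ite_eq',
          Finset.mem_univ, if_true, charMatrix, of_apply]
        field_simp [hS ρ]

theorem charMatrix_eq_diagonal_mul_transpose :
    charMatrix S Ω = diagonal (fun ρ => (S Ω ρ)⁻¹) * Sᵀ := by
  ext ρ l
  simp [charMatrix, diagonal_mul, div_eq_inv_mul]

theorem charMatrix_mul_eq_one (hVS : V * S = 1) (hS : ∀ ρ, S Ω ρ ≠ 0) :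
    charMatrix S Ω * (Vᵀ * diagonal (fun ρ => S Ω ρ)) = 1 := by
  rw [charMatrix_eq_diagonal_mul_transpose, Matrix.mul_assoc, ← Matrix.mul_assoc Sᵀ,
    ← transpose_mul, hVS, transpose_one, Matrix.one_mul, diagonal_mul_diagonal]
  simp [hS]

def charEquiv (hVS : V * S = 1) (hS : ∀ ρ, S Ω ρ ≠ 0) : (I → K) ≃ₗ[K] (I → K) :=
  (charMatrix S Ω).toLinearEquiv' (invertibleOfRightInverse _ _ (charMatrix_mul_eq_one hVS hS))

theorem charEquiv_apply (hVS : V * S = 1) (hS : ∀ ρ, S Ω ρ ≠ 0) (f : I → K) :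
    charEquiv hVS hS f = charMatrix S Ω *ᵥ f :=
  rfl

end Verlinde

open Verlinde

theorem fusion_algebra_semisimple_general {I : Type*} [Fintype I] [DecidableEq I] (Ω : I)
    (S : Matrix I I ℂ)
    (huni : S * S.conjTranspose = 1)
    (hpos : ∀ ρ : I, ∃ r : ℝ, 0 < r ∧ S Ω ρ = (r : ℂ))
    (N : I → I → I → ℂ)
    (hN : ∀ l m n : I, N l m n =
      ∑ ρ : I, S l ρ * S m ρ * (starRingEnd ℂ) (S n ρ) / S Ω ρ)
    -- the fusion product on `ℂ^I`, written in coordinates w.r.t. the basis `{Φ_λ}`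
    (star : (I → ℂ) → (I → ℂ) → (I → ℂ))
    (hstar : ∀ f g : I → ℂ, ∀ ν : I, star f g ν = ∑ l : I, ∑ m : I, f l * g m * N l m ν) :
    ∃ E : (I → ℂ) ≃ₗ[ℂ] (I → ℂ),
      (∀ l : I, E (Pi.single l 1) = fun ρ : I => S l ρ / S Ω ρ) ∧
      E (Pi.single Ω 1) = 1 ∧
      (∀ f g : I → ℂ, E (star f g) = E f * E g) ∧
      (∀ f g : I → ℂ, star f g = star g f) := by
  have hS : ∀ ρ, S Ω ρ ≠ 0 := fun ρ => by
    obtain ⟨r, hr, h⟩ := hpos ρ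
    exact h ▸ Complex.ofReal_ne_zero.mpr hr.ne'
  have hVS : Sᴴ * S = 1 := mul_eq_one_comm.mp huni
  obtain rfl : N = fusionCoeff S Sᴴ Ω := by
    funext l m n
    simp only [hN, fusionCoeff, conjTranspose_apply, starRingEnd_apply]
  obtain rfl : star = fusionMul (fusionCoeff S Sᴴ Ω) := by
    funext f g ν
    exact hstar f g ν
  refine ⟨charEquiv hVS hS, fun l => ?_, ?_, fun f g => ?_,
    fusionMul_comm (fusionCoeff_comm S Sᴴ Ω)⟩
  · rw [charEquiv_apply, mulVec_single_one]
    rfl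
  · funext ρ
    simp [charEquiv_apply, charMatrix, hS ρ]
  · funext ρ
    exact dotProduct_fusionMul (charMatrix_dotProduct_fusionCoeff hVS hS ρ) f g

/-- Semisimplicity of the fusion algebra: the ℂ-algebra with basis
`{Φ_λ}` and product `Φ_λ ⋆ Φ_μ = Σ_ν N_{λμ}^ν Φ_ν` and unit `Φ_Ω` is isomorphic,
via the linear extension of `Φ_λ ↦ (S_{λρ}/S_{Ωρ})_ρ`, to the function algebra
`ℂ^I` with pointwise multiplication; in particular it is a commutative
semisimple ring. -/
theorem fusion_algebra_semisimple {I : Type*} [Fintype I] [DecidableEq I] (Ω : I)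
    (S : Matrix I I ℂ)
    (hsym : ∀ l m : I, S l m = S m l)
    (huni : S * S.conjTranspose = 1)
    (hpos : ∀ ρ : I, ∃ r : ℝ, 0 < r ∧ S Ω ρ = (r : ℂ))
    (N : I → I → I → ℂ)
    (hN : ∀ l m n : I, N l m n =
      ∑ ρ : I, S l ρ * S m ρ * (starRingEnd ℂ) (S n ρ) / S Ω ρ)
    -- the fusion product on `ℂ^I`, written in coordinates w.r.t. the basis `{Φ_λ}`
    (star : (I → ℂ) → (I → ℂ) → (I → ℂ))
    (hstar : ∀ f g : I → ℂ, ∀ ν : I, star f g ν = ∑ l : I, ∑ m : I, f l * g m * N l m ν) :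
    ∃ E : (I → ℂ) ≃ₗ[ℂ] (I → ℂ),
      (∀ l : I, E (Pi.single l 1) = fun ρ : I => S l ρ / S Ω ρ) ∧
      E (Pi.single Ω 1) = 1 ∧
      (∀ f g : I → ℂ, E (star f g) = E f * E g) ∧
      (∀ f g : I → ℂ, star f g = star g f) :=
  fusion_algebra_semisimple_general Ω S huni hpos N hN star hstar
end

section
/- Factorization of Verlinde numbers under sewing two components: for all g₁,g₂ ∈ ℕ and all labels λ₁,…,λ_m, κ₁,…,κ_n ∈ I, Σ_{μ∈I} V_{g₁}(λ₁,…,λ_m,μ)·V_{g₂}(κ₁,…,κ_n,μ⁺) = V_{g₁+g₂}(λ₁,…,λ_m,κ₁,…,κ_n). -/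
/-!
Each Verlinde number is a sum over `ρ` of one factor `S λ ρ / S Ω ρ` per insertion times the genus
weight `|S Ω ρ|^{2-2g}`. Since `S μ⁺ σ = conj (S μ σ)`, unitarity of `S` gives
`∑_μ S μ ρ · S μ⁺ σ = δ_{ρσ}`: summing over the sewn label `μ` collapses the double sum over
`(ρ, σ)` to its diagonal, where the factors `S Ω ρ⁻¹` contributed by `μ` and `μ⁺` combine with
`|S Ω ρ|^{2-2g₁} · |S Ω ρ|^{2-2g₂}` into `|S Ω ρ|^{2-2(g₁+g₂)}` because `S Ω ρ` is positive.
-/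

open Finset

theorem Fin.prod_comp_snoc {M α : Type*} [CommMonoid M] {n : ℕ} (f : α → M) (a : Fin n → α)
    (x : α) : ∏ i, f ((Fin.snoc a x : Fin (n + 1) → α) i) = (∏ i, f (a i)) * f x := by
  simp [Fin.prod_univ_castSucc]

theorem Fin.prod_comp_append {M α : Type*} [CommMonoid M] {m n : ℕ} (f : α → M)
    (a : Fin m → α) (b : Fin n → α) :
    ∏ i, f (Fin.append a b i) = (∏ i, f (a i)) * ∏ i, f (b i) := by
  simp [Fin.prod_univ_add]

theorem sum_mul_sum_of_orthogonal {R I : Type*} [CommSemiring R] [Fintype I] [DecidableEq I]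
    {P Q : I → I → R} (hPQ : ∀ ρ σ, ∑ μ, P μ ρ * Q μ σ = if ρ = σ then 1 else 0) (a b : I → R) :
    ∑ μ, (∑ ρ, a ρ * P μ ρ) * (∑ σ, b σ * Q μ σ) = ∑ ρ, a ρ * b ρ := by
  calc ∑ μ, (∑ ρ, a ρ * P μ ρ) * (∑ σ, b σ * Q μ σ)
      = ∑ μ, ∑ ρ, ∑ σ, a ρ * P μ ρ * (b σ * Q μ σ) := by simp only [sum_mul_sum]
    _ = ∑ ρ, ∑ σ, ∑ μ, a ρ * P μ ρ * (b σ * Q μ σ) := by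
        rw [sum_comm]
        exact sum_congr rfl fun ρ _ => sum_comm
    _ = ∑ ρ, ∑ σ, a ρ * b σ * ∑ μ, P μ ρ * Q μ σ := by
        simp only [mul_sum]
        exact sum_congr rfl fun ρ _ => sum_congr rfl fun σ _ => sum_congr rfl fun μ _ => by ring
    _ = ∑ ρ, a ρ * b ρ := by simp [hPQ]

theorem zpow_two_sub_two_mul_div_mul {K : Type*} [Field K] {x : K} (hx : x ≠ 0) (a b : ℕ) :
    x ^ (2 - 2 * (a : ℤ)) / x * (x ^ (2 - 2 * (b : ℤ)) / x) = x ^ (2 - 2 * ((a + b : ℕ) : ℤ)) := by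
  rw [div_mul_div_comm, ← zpow_add₀ hx, div_eq_iff (mul_ne_zero hx hx), ← zpow_two,
    ← zpow_add₀ hx]
  congr 1
  push_cast
  ring

section ChargeConjugation

variable {I : Type*} [Fintype I] [DecidableEq I] {S : Matrix I I ℂ} {plus : I → I}

theorem apply_chargeConj_eq_conj (hsym : ∀ l m : I, S l m = S m l)
    (huni : S * S.conjTranspose = 1) (hC : ∀ μ ν : I, (S * S) μ ν = if ν = plus μ then 1 else 0)
    (μ σ : I) : S (plus μ) σ = starRingEnd ℂ (S μ σ) := by
  have hSSS : (S * S * S.conjTranspose) μ σ = S μ σ := by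
    rw [Matrix.mul_assoc, huni, Matrix.mul_one]
  simp only [Matrix.mul_apply, hC, ite_mul, one_mul, zero_mul, sum_ite_eq', mem_univ,
    if_true, Matrix.conjTranspose_apply] at hSSS
  rw [hsym, ← hSSS, RCLike.star_def, Complex.conj_conj]

theorem sum_mul_apply_chargeConj (hsym : ∀ l m : I, S l m = S m l)
    (huni : S * S.conjTranspose = 1) (hC : ∀ μ ν : I, (S * S) μ ν = if ν = plus μ then 1 else 0)
    (ρ σ : I) : ∑ μ, S μ ρ * S (plus μ) σ = if ρ = σ then 1 else 0 := by
  have h := congrFun (congrFun huni ρ) σ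
  rw [Matrix.mul_apply, Matrix.one_apply] at h
  rw [← h]
  refine sum_congr rfl fun μ _ => ?_
  rw [apply_chargeConj_eq_conj hsym huni hC, hsym μ ρ, hsym μ σ, Matrix.conjTranspose_apply,
    RCLike.star_def]

end ChargeConjugation

theorem verlinde_factorization_sewing_general {I : Type*} [Fintype I] [DecidableEq I] (Ω : I)
    (S : Matrix I I ℂ)
    (hsym : ∀ l m : I, S l m = S m l)
    (huni : S * S.conjTranspose = 1)
    (hpos : ∀ ρ : I, ∃ r : ℝ, 0 < r ∧ S Ω ρ = (r : ℂ))
    (plus : I → I)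
    (hC : ∀ μ ν : I, (S * S) μ ν = if ν = plus μ then 1 else 0)
    (V : ℕ → (m : ℕ) → (Fin m → I) → ℂ)
    (hV : ∀ (g : ℕ) (m : ℕ) (lam : Fin m → I),
      V g m lam = ∑ ρ : I, (∏ i : Fin m, S (lam i) ρ / S Ω ρ) *
        ((‖S Ω ρ‖ : ℂ)) ^ ((2 : ℤ) - 2 * (g : ℤ))) :
    ∀ (g₁ g₂ : ℕ) (m n : ℕ) (lam : Fin m → I) (kap : Fin n → I),
      ∑ μ : I, V g₁ (m + 1) (Fin.snoc lam μ) * V g₂ (n + 1) (Fin.snoc kap (plus μ)) =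
        V (g₁ + g₂) (m + n) (Fin.append lam kap) := by
  intro g₁ g₂ m n lam kap
  set w : ℕ → I → ℂ := fun g ρ => (‖S Ω ρ‖ : ℂ) ^ ((2 : ℤ) - 2 * (g : ℤ))
  set ins : (k : ℕ) → (Fin k → I) → I → ℂ := fun k κ ρ => ∏ i, S (κ i) ρ / S Ω ρ
  have hsnoc : ∀ g k (κ : Fin k → I) μ,
      V g (k + 1) (Fin.snoc κ μ) = ∑ ρ, ins k κ ρ * w g ρ / S Ω ρ * S μ ρ := by
    intro g k κ μ
    rw [hV]
    refine sum_congr rfl fun ρ _ => ?_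
    rw [Fin.prod_comp_snoc (fun l => S l ρ / S Ω ρ)]
    ring
  simp only [hsnoc]
  rw [sum_mul_sum_of_orthogonal (sum_mul_apply_chargeConj hsym huni hC), hV]
  refine sum_congr rfl fun ρ _ => ?_
  obtain ⟨r, hr, hSr⟩ := hpos ρ
  have hnorm : (‖S Ω ρ‖ : ℂ) = S Ω ρ := by
    rw [hSr, Complex.norm_real, Real.norm_of_nonneg hr.le]
  have hS0 : S Ω ρ ≠ 0 := by rw [hSr]; exact_mod_cast hr.ne'
  rw [Fin.prod_comp_append (fun l => S l ρ / S Ω ρ)]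
  simp only [w, ins, hnorm, ← zpow_two_sub_two_mul_div_mul hS0 g₁ g₂]
  ring

/-- Factorization of Verlinde numbers under sewing two components:
`Σ_μ V_{g₁}(λ₁,…,λ_m,μ) · V_{g₂}(κ₁,…,κ_n,μ⁺) = V_{g₁+g₂}(λ₁,…,λ_m,κ₁,…,κ_n)`. -/
theorem verlinde_factorization_sewing {I : Type*} [Fintype I] [DecidableEq I] (Ω : I)
    (S : Matrix I I ℂ)
    (hsym : ∀ l m : I, S l m = S m l)
    (huni : S * S.conjTranspose = 1)
    (hpos : ∀ ρ : I, ∃ r : ℝ, 0 < r ∧ S Ω ρ = (r : ℂ))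
    (N : I → I → I → ℂ)
    (hN : ∀ l m n : I, N l m n =
      ∑ ρ : I, S l ρ * S m ρ * (starRingEnd ℂ) (S n ρ) / S Ω ρ)
    (plus : I → I)
    (hC : ∀ μ ν : I, (S * S) μ ν = if ν = plus μ then 1 else 0)
    (V : ℕ → (m : ℕ) → (Fin m → I) → ℂ)
    (hV : ∀ (g : ℕ) (m : ℕ) (lam : Fin m → I),
      V g m lam = ∑ ρ : I, (∏ i : Fin m, S (lam i) ρ / S Ω ρ) *
        ((‖S Ω ρ‖ : ℂ)) ^ ((2 : ℤ) - 2 * (g : ℤ))) :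
    ∀ (g₁ g₂ : ℕ) (m n : ℕ) (lam : Fin m → I) (kap : Fin n → I),
      ∑ μ : I, V g₁ (m + 1) (Fin.snoc lam μ) * V g₂ (n + 1) (Fin.snoc kap (plus μ)) =
        V (g₁ + g₂) (m + n) (Fin.append lam kap) :=
  verlinde_factorization_sewing_general Ω S hsym huni hpos plus hC V hV
end
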